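/- arXiv:2012.04633 — 4 statements merged into one kernel-verified Lean document; each statement's English description precedes it below -/
import Mathlib

section
/- For all real numbers x_1,...,x_n, the negative of the sum over pairs i<j of |x_i - x_j| equals the sum over k from 1 to n of (2k - n - 1)·x_{(k)}, where x_{(n)} ≤ ... ≤ x_{(1)} is the decreasing reordering of x_1,...,x_n (Baxter's combinatorial identity). -/
open Finset

/-- **Baxter's combinatorial identity.**
For all real numbers `x 0, …, x (n-1)`, the negative of the sum over pairs `i < j` of
`|x i - x j|` equals `∑ₖ (2k - n - 1) · x₍ₖ₎`, where `y j = x₍ⱼ₊₁₎` is the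
non-increasing rearrangement of `x` (so `y 0 = x₍₁₎` is the maximum and
`y (n-1) = x₍ₙ₎` is the minimum), i.e. `y = x ∘ σ` for a permutation `σ` with `y` antitone. -/
theorem baxter_identity (n : ℕ) (x y : Fin n → ℝ) (σ : Equiv.Perm (Fin n))
    (hy : y = x ∘ σ) (hanti : Antitone y) :
    -(∑ p ∈ Finset.univ.filter (fun p : Fin n × Fin n => p.1 < p.2), |x p.1 - x p.2|) =
      ∑ k : Fin n, (2 * ((k : ℕ) + 1) - (n : ℝ) - 1) * y k := by
  -- Step 1: double-counting: 2 * (pair sum) = full sum, for any z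
  have half : ∀ z : Fin n → ℝ,
      2 * ∑ p ∈ Finset.univ.filter (fun p : Fin n × Fin n => p.1 < p.2), |z p.1 - z p.2|
        = ∑ p : Fin n × Fin n, |z p.1 - z p.2| := by
    intro z
    have hsplit := Finset.sum_filter_add_sum_filter_not Finset.univ
      (fun p : Fin n × Fin n => p.1 < p.2) (fun p => |z p.1 - z p.2|)
    have hswap : ∑ p ∈ Finset.univ.filter (fun p : Fin n × Fin n => ¬ p.1 < p.2), |z p.1 - z p.2|
        = ∑ p ∈ Finset.univ.filter (fun p : Fin n × Fin n => p.1 < p.2), |z p.1 - z p.2| := by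
      rw [Finset.sum_filter, Finset.sum_filter]
      rw [← Equiv.sum_comp (Equiv.prodComm (Fin n) (Fin n))]
      apply Finset.sum_congr rfl
      intro p _
      simp only [Equiv.prodComm_apply, Prod.fst_swap, Prod.snd_swap]
      rcases lt_trichotomy p.1 p.2 with h | h | h
      · simp [h, not_lt.mpr h.le, abs_sub_comm]
      · simp [h]
      · simp [h, not_lt.mpr h.le, asymm h]
    linarith [hsplit, hswap]
  -- Step 2: invariance of full sum under permutation
  have inv : (∑ p : Fin n × Fin n, |x p.1 - x p.2|) = ∑ p : Fin n × Fin n, |y p.1 - y p.2| := by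
    subst hy
    rw [← Equiv.sum_comp (σ.prodCongr σ) (fun p : Fin n × Fin n => |x p.1 - x p.2|)]
    rfl
  have key : (∑ p ∈ Finset.univ.filter (fun p : Fin n × Fin n => p.1 < p.2), |x p.1 - x p.2|)
      = ∑ p ∈ Finset.univ.filter (fun p : Fin n × Fin n => p.1 < p.2), |y p.1 - y p.2| := by
    have := half x; have := half y; linarith [inv]
  rw [key]
  -- Step 3: drop abs using antitone
  have habs : ∀ p ∈ Finset.univ.filter (fun p : Fin n × Fin n => p.1 < p.2),
      |y p.1 - y p.2| = y p.1 - y p.2 := by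
    intro p hp
    rw [Finset.mem_filter] at hp
    exact abs_of_nonneg (sub_nonneg.mpr (hanti hp.2.le))
  rw [Finset.sum_congr rfl habs]
  -- Step 4: counting
  rw [Finset.sum_sub_distrib]
  have hA : (∑ p ∈ Finset.univ.filter (fun p : Fin n × Fin n => p.1 < p.2), y p.1)
      = ∑ i : Fin n, ((n : ℝ) - 1 - i) * y i := by
    rw [Finset.sum_filter, Fintype.sum_prod_type]
    apply Finset.sum_congr rfl
    intro i _
    calc (∑ j : Fin n, if i < j then y i else 0)
        = ∑ j ∈ Finset.univ.filter (fun j => i < j), y i := (Finset.sum_filter _ _).symm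
      _ = ∑ j ∈ Finset.Ioi i, y i := by congr 1; ext j; simp
      _ = (Finset.Ioi i).card • y i := Finset.sum_const _
      _ = ((n : ℝ) - 1 - i) * y i := by
          rw [Fin.card_Ioi, nsmul_eq_mul]
          congr 1
          have h1 : (i:ℕ) + 1 ≤ n := i.isLt
          rw [show n - 1 - (i:ℕ) = n - ((i:ℕ) + 1) by omega, Nat.cast_sub h1]
          push_cast; ring
  have hB : (∑ p ∈ Finset.univ.filter (fun p : Fin n × Fin n => p.1 < p.2), y p.2)
      = ∑ j : Fin n, (j : ℝ) * y j := by
    rw [Finset.sum_filter, Fintype.sum_prod_type, Finset.sum_comm]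
    apply Finset.sum_congr rfl
    intro j _
    calc (∑ i : Fin n, if i < j then y j else 0)
        = ∑ i ∈ Finset.univ.filter (fun i => i < j), y j := (Finset.sum_filter _ _).symm
      _ = ∑ i ∈ Finset.Iio j, y j := by congr 1; ext i; simp
      _ = (Finset.Iio j).card • y j := Finset.sum_const _
      _ = (j : ℝ) * y j := by rw [Fin.card_Iio, nsmul_eq_mul]
  rw [hA, hB, ← Finset.sum_sub_distrib, ← Finset.sum_neg_distrib]
  exact Finset.sum_congr rfl (fun k _ => by ring)
end

section
/- Let ρ be a compactly supported probability density on ℝ, α > n−1 and β > 0. The partition function Z_n = ∫_{ℝ^n} exp(−β H_n(x_1,...,x_n)) dx_1···dx_n is finite if and only if α > n − 1. -/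
/-!
Since `||x - y| - |x|| ≤ |y|`, the background potential satisfies `|U_ρ(x) + |x|/2| ≤ M/2`,
where `M` is the first absolute moment of `ρ`; so, up to a bounded error,
`-βH_n = (β/2) ∑_{i<j} |x_i - x_j| - (βα/2) ∑_i |x_i|`.
If `α > n - 1`, the bound `|x_i - x_j| ≤ |x_i| + |x_j|` dominates the Boltzmann factor by
`∏_i exp (C - (β/2)(α - (n - 1)) |x_i|)`, which is integrable.
If `α ≤ n - 1`, put `n - 1` charges in `[0, 1]` and the last one at `x ≥ 1`: the pair term
grows like `(n - 1) x` and the background term decreases only like `α x`, so the Boltzmann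
factor is bounded below on a box of infinite volume.
-/

open MeasureTheory ProbabilityTheory Filter Real Set
open scoped ENNReal BigOperators

noncomputable section

/-- Sum over pairs `i < j` of `|x i - x j|`. -/
def pairSum (n : ℕ) (x : Fin n → ℝ) : ℝ :=
  ∑ p ∈ Finset.univ.filter (fun p : Fin n × Fin n => p.1 < p.2), |x p.1 - x p.2|

/-- Coulomb potential generated by a background with density `ρ` :
`U_ρ(x) = −∫ |x−y|/2 ρ(y) dy`. -/
def coulombU (ρ : ℝ → ℝ) (x : ℝ) : ℝ := -∫ y, |x - y| / 2 * ρ y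

/-- Jellium energy of `n` unit negative charges in a background of total charge `α`
smeared according to the density `ρ` :
`H_n(x) = −(1/2)∑_{i<j}|x_i − x_j| − α ∑_i U_ρ(x_i)`. -/
def jelliumH (n : ℕ) (α : ℝ) (ρ : ℝ → ℝ) (x : Fin n → ℝ) : ℝ :=
  -(1 / 2) * pairSum n x - α * ∑ i, coulombU ρ (x i)


lemma integrable_exp_neg_mul_abs {γ : ℝ} (hγ : 0 < γ) :
    Integrable fun t : ℝ => exp (-γ * |t|) := by
  rw [← integrableOn_univ, ← Iic_union_Ioi (a := (0 : ℝ)), integrableOn_union]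
  refine ⟨(integrableOn_exp_mul_Iic hγ 0).congr_fun (fun t ht => ?_) measurableSet_Iic,
    (integrableOn_exp_mul_Ioi (neg_lt_zero.2 hγ) 0).congr_fun (fun t ht => ?_) measurableSet_Ioi⟩
  · rw [abs_of_nonpos ht, mul_neg, neg_mul, neg_neg]
  · rw [abs_of_pos ht]

lemma HasCompactSupport.integrable_abs_mul {ρ : ℝ → ℝ} (hρc : HasCompactSupport ρ)
    (hρ : Integrable ρ) : Integrable fun y => |y| * ρ y :=
  (integrableOn_iff_integrable_of_support_subset
      ((Function.support_mul_subset_right _ _).trans (subset_tsupport ρ))).1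
    (hρ.integrableOn.continuousOn_mul continuous_abs.continuousOn hρc.isCompact)

section Potential

variable {ρ : ℝ → ℝ}

lemma integrable_abs_sub_div_two_mul (hρ : Integrable ρ) (hM : Integrable fun y => |y| * ρ y)
    (hρ0 : ∀ y, 0 ≤ ρ y) (x : ℝ) : Integrable fun y => |x - y| / 2 * ρ y := by
  refine ((hρ.const_mul |x|).add hM).mono'
    (((continuous_const.sub continuous_id).abs.div_const 2).aestronglyMeasurable.mul
      hρ.aestronglyMeasurable) (ae_of_all _ fun y => ?_)
  rw [Real.norm_of_nonneg (mul_nonneg (by positivity) (hρ0 y)), Pi.add_apply]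
  nlinarith [abs_sub x y, hρ0 y, abs_nonneg (x - y)]

lemma abs_coulombU_add_abs_div_two_le (hρ : Integrable ρ)
    (hM : Integrable fun y => |y| * ρ y) (hρ0 : ∀ y, 0 ≤ ρ y) (hρ1 : ∫ y, ρ y = 1)
    (x : ℝ) :
    |coulombU ρ x + |x| / 2| ≤ (∫ y, |y| * ρ y) / 2 := by
  have hrepr : coulombU ρ x + |x| / 2 = ∫ y, (|x| - |x - y|) / 2 * ρ y := by
    simp_rw [sub_div, sub_mul]
    rw [integral_sub (hρ.const_mul _) (integrable_abs_sub_div_two_mul hρ hM hρ0 x),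
      integral_const_mul, hρ1, coulombU]
    ring
  rw [hrepr, ← integral_div 2 (fun y => |y| * ρ y), ← Real.norm_eq_abs]
  refine norm_integral_le_of_norm_le (hM.div_const 2) (ae_of_all _ fun y => ?_)
  rw [norm_mul, norm_div, Real.norm_of_nonneg (hρ0 y), Real.norm_eq_abs, Real.norm_two,
    div_mul_eq_mul_div]
  have := abs_abs_sub_abs_le_abs_sub x (x - y)
  rw [sub_sub_cancel] at this
  gcongr ?_ * _ / _
  exact hρ0 y

end Potential

lemma sum_filter_lt_add_eq (n : ℕ) (a : Fin n → ℝ) :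
    ∑ p ∈ Finset.univ.filter (fun p : Fin n × Fin n => p.1 < p.2), (a p.1 + a p.2) =
      ((n : ℝ) - 1) * ∑ i, a i := by
  have hswap : ∑ p ∈ Finset.univ.filter (fun p : Fin n × Fin n => p.1 < p.2), a p.2 =
      ∑ p ∈ Finset.univ.filter (fun p : Fin n × Fin n => p.2 < p.1), a p.1 :=
    Finset.sum_nbij' Prod.swap Prod.swap (by simp) (by simp) (by simp) (by simp) (by simp)
  have hoffDiag : ∑ p ∈ Finset.univ.filter (fun p : Fin n × Fin n => p.1 ≠ p.2), a p.1 =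
      ((n : ℝ) - 1) * ∑ i, a i := by
    rw [Finset.sum_filter, Fintype.sum_prod_type, Finset.mul_sum]
    refine Finset.sum_congr rfl fun i _ => ?_
    rw [← Finset.sum_filter, Finset.filter_ne]
    simp only [Finset.sum_const, Finset.card_erase_of_mem (Finset.mem_univ i), Finset.card_univ,
      Fintype.card_fin, nsmul_eq_mul, Nat.cast_pred i.pos]
  rw [Finset.sum_add_distrib, hswap, ← Finset.sum_union, ← Finset.filter_or]
  · simp_rw [← ne_iff_lt_or_gt]
    exact hoffDiag
  · exact Finset.disjoint_filter.2 fun p _ h h' => lt_asymm h h'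

lemma pairSum_le_mul_sum_abs (n : ℕ) (x : Fin n → ℝ) :
    pairSum n x ≤ ((n : ℝ) - 1) * ∑ i, |x i| := by
  rw [← sum_filter_lt_add_eq]
  exact Finset.sum_le_sum fun p _ => abs_sub _ _

lemma sum_abs_sub_last_le_pairSum (m : ℕ) (x : Fin (m + 1) → ℝ) :
    ∑ i : Fin m, |x i.castSucc - x (Fin.last m)| ≤ pairSum (m + 1) x := by
  let e : Fin m ↪ Fin (m + 1) × Fin (m + 1) :=
    ⟨fun i => (i.castSucc, Fin.last m),
      fun i j h => Fin.castSucc_injective m (congrArg Prod.fst h)⟩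
  calc ∑ i : Fin m, |x i.castSucc - x (Fin.last m)|
      = ∑ p ∈ Finset.univ.map e, |x p.1 - x p.2| := by rw [Finset.sum_map]; rfl
    _ ≤ pairSum (m + 1) x := by
      refine Finset.sum_le_sum_of_subset_of_nonneg ?_ fun _ _ _ => abs_nonneg _
      intro p hp
      obtain ⟨i, -, rfl⟩ := Finset.mem_map.1 hp
      simp only [Finset.mem_filter, Finset.mem_univ, true_and]
      exact Fin.castSucc_lt_last i

def lastRayBox (m : ℕ) : Set (Fin (m + 1) → ℝ) :=
  Set.pi univ (Fin.lastCases (motive := fun _ => Set ℝ) (Ici 1) fun _ => Icc 0 1)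

lemma mem_lastRayBox {m : ℕ} {x : Fin (m + 1) → ℝ} :
    x ∈ lastRayBox m ↔ (∀ i : Fin m, x i.castSucc ∈ Icc 0 1) ∧ 1 ≤ x (Fin.last m) := by
  simp [lastRayBox, Fin.forall_fin_succ', and_comm]

lemma measurableSet_lastRayBox (m : ℕ) : MeasurableSet (lastRayBox m) :=
  MeasurableSet.univ_pi fun i => by cases i using Fin.lastCases <;> simp

lemma volume_lastRayBox (m : ℕ) : volume (lastRayBox m) = ⊤ := by
  simp [lastRayBox, volume_pi_pi, Fin.prod_univ_castSucc]

section Energy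

variable {ρ : ℝ → ℝ} {β α M : ℝ}

lemma neg_mul_jelliumH_le (n : ℕ) (hβ : 0 ≤ β) (hα : 0 ≤ α)
    (hU : ∀ t, |coulombU ρ t + |t| / 2| ≤ M / 2) (x : Fin n → ℝ) :
    -β * jelliumH n α ρ x ≤ ∑ i, (β * α * M / 2 + -(β / 2 * (α - (n - 1))) * |x i|) := by
  have hP := mul_le_mul_of_nonneg_left (pairSum_le_mul_sum_abs n x) (by positivity : 0 ≤ β / 2)
  have hsumU : ∑ i, coulombU ρ (x i) ≤ (n * M - ∑ i, |x i|) / 2 := by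
    calc ∑ i, coulombU ρ (x i) ≤ ∑ i, (M - |x i|) / 2 := Finset.sum_le_sum fun i _ => by
          linarith [(abs_le.1 (hU (x i))).2]
      _ = (n * M - ∑ i, |x i|) / 2 := by simp [← Finset.sum_div, Finset.sum_sub_distrib]
  have hU' := mul_le_mul_of_nonneg_left hsumU (by positivity : 0 ≤ β * α)
  simp only [Finset.sum_add_distrib, Finset.sum_const, Finset.card_univ, Fintype.card_fin,
    nsmul_eq_mul, ← Finset.mul_sum, jelliumH]
  linarith

lemma lintegral_exp_neg_mul_jelliumH_lt_top (n : ℕ) (hβ : 0 < β) (hα : 0 ≤ α)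
    (hαn : (n : ℝ) - 1 < α) (hU : ∀ t, |coulombU ρ t + |t| / 2| ≤ M / 2) :
    ∫⁻ x : Fin n → ℝ, ENNReal.ofReal (exp (-β * jelliumH n α ρ x)) < ⊤ := by
  have hγ : 0 < β / 2 * (α - (n - 1)) := by have := sub_pos.2 hαn; positivity
  have hfactor :
      Integrable fun t : ℝ => exp (β * α * M / 2 + -(β / 2 * (α - (n - 1))) * |t|) := by
    simp_rw [exp_add]
    exact (integrable_exp_neg_mul_abs hγ).const_mul _
  have hbound := Integrable.fintype_prod fun _ : Fin n => hfactor
  refine lt_of_le_of_lt (lintegral_mono fun x => ?_) hbound.lintegral_lt_top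
  rw [← exp_sum]
  exact ENNReal.ofReal_le_ofReal (exp_le_exp.2 (neg_mul_jelliumH_le n hβ.le hα hU x))

lemma neg_mul_jelliumH_ge {m : ℕ} (hβ : 0 ≤ β) (hα : 0 ≤ α) (hαm : α ≤ m)
    (hU : ∀ t, |coulombU ρ t + |t| / 2| ≤ M / 2) {x : Fin (m + 1) → ℝ}
    (hx : x ∈ lastRayBox m) :
    -(β / 2) * (m + α * (m + (m + 1) * M)) ≤ -β * jelliumH (m + 1) α ρ x := by
  obtain ⟨hx, hxlast⟩ := mem_lastRayBox.1 hx
  set y := x (Fin.last m)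
  have hP : m * (y - 1) ≤ pairSum (m + 1) x := by
    calc m * (y - 1) = ∑ _i : Fin m, (y - 1) := by
          rw [Finset.sum_const, Finset.card_univ, Fintype.card_fin, nsmul_eq_mul]
      _ ≤ ∑ i : Fin m, |x i.castSucc - y| := Finset.sum_le_sum fun i _ => by
          rw [abs_sub_comm]; linarith [(hx i).2, le_abs_self (y - x i.castSucc)]
      _ ≤ pairSum (m + 1) x := sum_abs_sub_last_le_pairSum m x
  have hsumU : -(m * (1 + M) + (y + M)) / 2 ≤ ∑ i, coulombU ρ (x i) := by
    rw [Fin.sum_univ_castSucc]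
    have hbox : ∑ _i : Fin m, -(1 + M) / 2 ≤ ∑ i : Fin m, coulombU ρ (x i.castSucc) :=
      Finset.sum_le_sum fun i _ => by
        have := (abs_le.1 (hU (x i.castSucc))).1
        rw [abs_of_nonneg (hx i).1] at this
        linarith [(hx i).2]
    have hlast := (abs_le.1 (hU y)).1
    rw [abs_of_nonneg (by linarith)] at hlast
    simp only [Finset.sum_const, Finset.card_univ, Fintype.card_fin, nsmul_eq_mul] at hbox
    linarith
  have hP' := mul_le_mul_of_nonneg_left hP (by positivity : 0 ≤ β / 2)
  have hU' := mul_le_mul_of_nonneg_left hsumU (by positivity : 0 ≤ β * α)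
  have hy : 0 ≤ β / 2 * (m - α) * y :=
    mul_nonneg (mul_nonneg (by positivity) (sub_nonneg.2 hαm)) (by linarith)
  rw [jelliumH]
  linarith

lemma lintegral_exp_neg_mul_jelliumH_eq_top {m : ℕ} (hβ : 0 ≤ β) (hα : 0 ≤ α)
    (hαm : α ≤ m) (hU : ∀ t, |coulombU ρ t + |t| / 2| ≤ M / 2) :
    ∫⁻ x : Fin (m + 1) → ℝ, ENNReal.ofReal (exp (-β * jelliumH (m + 1) α ρ x)) = ⊤ := by
  set C := -(β / 2) * (m + α * (m + (m + 1) * M))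
  refine top_le_iff.1 ?_
  calc ⊤ = ∫⁻ _ in lastRayBox m, ENNReal.ofReal (exp C) := by
        rw [setLIntegral_const, volume_lastRayBox, ENNReal.mul_top (by simp [exp_pos])]
    _ ≤ ∫⁻ x in lastRayBox m, ENNReal.ofReal (exp (-β * jelliumH (m + 1) α ρ x)) :=
        setLIntegral_mono' (measurableSet_lastRayBox m) fun x hx =>
          ENNReal.ofReal_le_ofReal <| exp_le_exp.2 <| neg_mul_jelliumH_ge hβ hα hαm hU hx
    _ ≤ _ := setLIntegral_le_lintegral _ _

end Energy

theorem partition_function_finite_iff_general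
    (n : ℕ) (β α : ℝ) (hβ : 0 < β) (hα : 0 < α)
    (ρ : ℝ → ℝ) (hρ0 : ∀ x, 0 ≤ ρ x)
    (hρ1 : ∫ x, ρ x = 1) (hρc : HasCompactSupport ρ) :
    (∫⁻ x : Fin n → ℝ, ENNReal.ofReal (Real.exp (-β * jelliumH n α ρ x))) ≠ ⊤ ↔
      (n : ℝ) - 1 < α := by
  have hρ : Integrable ρ := .of_integral_ne_zero (by rw [hρ1]; exact one_ne_zero)
  have hU := abs_coulombU_add_abs_div_two_le hρ (hρc.integrable_abs_mul hρ) hρ0 hρ1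
  constructor
  · intro hfinite
    by_contra! hαn
    obtain ⟨m, rfl⟩ : ∃ m, n = m + 1 :=
      Nat.exists_eq_add_one.2 (by exact_mod_cast (by linarith : (0 : ℝ) < n))
    push_cast at hαn
    exact hfinite <| lintegral_exp_neg_mul_jelliumH_eq_top hβ.le hα.le (by linarith) hU
  · intro hαn
    exact (lintegral_exp_neg_mul_jelliumH_lt_top n hβ hα.le hαn hU).ne

/-- The partition function `Z_n = ∫_{ℝⁿ} exp(−β H_n) dx` of the jellium with a compactly
supported background probability density is finite if and only if `α > n − 1`. -/
theorem partition_function_finite_iff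
    (n : ℕ) (β α : ℝ) (hβ : 0 < β) (hα : 0 < α)
    (ρ : ℝ → ℝ) (hρmeas : Measurable ρ) (hρ0 : ∀ x, 0 ≤ ρ x)
    (hρ1 : ∫ x, ρ x = 1) (hρc : HasCompactSupport ρ) :
    (∫⁻ x : Fin n → ℝ, ENNReal.ofReal (Real.exp (-β * jelliumH n α ρ x))) ≠ ⊤ ↔
      (n : ℝ) - 1 < α :=
  partition_function_finite_iff_general n β α hβ hα ρ hρ0 hρ1 hρc
end
end

section
/- Conditioning by steps: let X_1,...,X_n be independent real random variables with P(X_n ≤ ... ≤ X_1) > 0. Fix k ∈ {1,...,n} and let Y_k be a random variable, independent of (X_1,...,X_{k−1}), with the law of X_k conditioned on X_n ≤ ... ≤ X_k. Then P(Y_k ≤ X_{k−1} ≤ ... ≤ X_1) > 0 and the law of (X_k,...,X_1) conditioned on X_n ≤ ... ≤ X_1 equals the law of (Y_k, X_{k−1},...,X_1) conditioned on Y_k ≤ X_{k−1} ≤ ... ≤ X_1. -/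
/-!
The tail `(X_k, …, X_n)` and the head `(X_1, …, X_{k-1})` are independent, and the event
`B = {X_n ≤ ⋯ ≤ X_k}` depends on the tail only. Conditioning on `B` therefore keeps `X_k`
independent of the head and leaves the law of the head unchanged, so the law of
`U = (X_k, X_{k-1}, …, X_1)` under `P[|B]` is the law of `V = (Y_k, X_{k-1}, …, X_1)` under `P`.
Since `{X_n ≤ ⋯ ≤ X_1} = B ∩ {U monotone}` and `{Y_k ≤ X_{k-1} ≤ ⋯ ≤ X_1} = {V monotone}`,
conditioning both sides further on monotonicity gives the equality of laws, and
`P(V monotone) = P(X_n ≤ ⋯ ≤ X_1) / P(B) > 0`.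
-/

open MeasureTheory ProbabilityTheory Set
open scoped ProbabilityTheory

section Order

variable {ι β : Type*} [Preorder ι]

section Measurable

variable [Countable ι] [PartialOrder β] [TopologicalSpace β] [OrderClosedTopology β]
  [SecondCountableTopology β] [MeasurableSpace β] [OpensMeasurableSpace β]

lemma measurableSet_setOf_monotone :
    MeasurableSet {f : ι → β | Monotone f} := by
  simp only [Monotone, ofPred_forall]
  exact .iInter fun a => .iInter fun b => .iInter fun _ =>
    measurableSet_le (measurable_pi_apply a) (measurable_pi_apply b)

lemma measurableSet_setOf_antitoneOn (s : Set ι) : MeasurableSet {f : ι → β | AntitoneOn f s} := by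
  simp only [AntitoneOn, ofPred_forall]
  exact .iInter fun a => .iInter fun _ => .iInter fun b => .iInter fun _ => .iInter fun _ =>
    measurableSet_le (measurable_pi_apply b) (measurable_pi_apply a)

lemma measurableSet_setOf_antitone : MeasurableSet {f : ι → β | Antitone f} := by
  simpa only [antitoneOn_univ] using measurableSet_setOf_antitoneOn (β := β) (univ : Set ι)

end Measurable

variable [Preorder β]

lemma antitoneOn_Ici_iff {f : ι → β} {a : ι} :
    AntitoneOn f (Ici a) ↔ ∀ i j, a ≤ i → i ≤ j → f j ≤ f i :=
  ⟨fun h _ _ hi hij => h hi (hi.trans hij) hij, fun h _ hi _ _ hij => h _ _ hi hij⟩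

lemma antitoneOn_Ici_iff_antitone_finsetIci [LocallyFiniteOrderTop ι] {f : ι → β} {a : ι} :
    AntitoneOn f (Ici a) ↔ Antitone fun i : Finset.Ici a => f i := by
  rw [← Finset.coe_Ici]
  exact antitoneOn_iff_antitone

end Order

namespace ProbabilityTheory

variable {Ω α β γ : Type*} [MeasurableSpace Ω] [MeasurableSpace α] [MeasurableSpace β]
  [MeasurableSpace γ] {μ : Measure Ω}

lemma map_cond_preimage {Z : Ω → β} (hZ : Measurable Z) {S : Set β} (hS : MeasurableSet S) :
    (μ[|Z ⁻¹' S]).map Z = (μ.map Z)[|S] := by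
  rw [cond, cond, Measure.map_smul, Measure.restrict_map hZ hS, Measure.map_apply hZ hS]

section IndepFun

variable [IsFiniteMeasure μ] {T : Ω → β} {H : Ω → γ} {s : Set β}

lemma IndepFun.cond_preimage_apply_preimage (hTH : IndepFun T H μ) (hT : Measurable T)
    (hs : MeasurableSet s) (hμs : μ (T ⁻¹' s) ≠ 0) {v : Set γ} (hv : MeasurableSet v) :
    μ[H ⁻¹' v | T ⁻¹' s] = μ (H ⁻¹' v) := by
  rw [cond_apply (hT hs), hTH.measure_inter_preimage_eq_mul _ _ hs hv, ← mul_assoc,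
    ENNReal.inv_mul_cancel hμs (measure_ne_top _ _), one_mul]

lemma IndepFun.map_cond_preimage_left (hTH : IndepFun T H μ) (hT : Measurable T)
    (hH : Measurable H) (hs : MeasurableSet s) (hμs : μ (T ⁻¹' s) ≠ 0) :
    (μ[|T ⁻¹' s]).map H = μ.map H := by
  ext v hv
  rw [Measure.map_apply hH hv, Measure.map_apply hH hv,
    hTH.cond_preimage_apply_preimage hT hs hμs hv]

lemma IndepFun.cond_preimage_left (hTH : IndepFun T H μ) (hT : Measurable T)
    (hs : MeasurableSet s) (hμs : μ (T ⁻¹' s) ≠ 0) : IndepFun T H (μ[|T ⁻¹' s]) := by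
  refine indepFun_iff_measure_inter_preimage_eq_mul.2 fun u v hu hv => ?_
  rw [hTH.cond_preimage_apply_preimage hT hs hμs hv, cond_apply (hT hs), cond_apply (hT hs),
    ← inter_assoc, ← preimage_inter, hTH.measure_inter_preimage_eq_mul _ _ (hs.inter hu) hv,
    mul_assoc]

lemma IndepFun.map_prod_cond_preimage_left {f : β → α} {Y : Ω → α}
    (hTH : IndepFun T H μ) (hYH : IndepFun Y H μ) (hT : Measurable T) (hH : Measurable H)
    (hf : Measurable f) (hY : Measurable Y) (hs : MeasurableSet s) (hμs : μ (T ⁻¹' s) ≠ 0)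
    (hYlaw : μ.map Y = (μ[|T ⁻¹' s]).map (fun ω => f (T ω))) :
    (μ[|T ⁻¹' s]).map (fun ω => (f (T ω), H ω)) = μ.map (fun ω => (Y ω, H ω)) := by
  have hfT : Measurable fun ω => f (T ω) := hf.comp hT
  have hfTH : IndepFun (fun ω => f (T ω)) H (μ[|T ⁻¹' s]) :=
    (hTH.cond_preimage_left hT hs hμs).comp hf measurable_id
  rw [(indepFun_iff_map_prod_eq_prod_map_map hfT.aemeasurable hH.aemeasurable).1 hfTH,
    (indepFun_iff_map_prod_eq_prod_map_map hY.aemeasurable hH.aemeasurable).1 hYH,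
    hTH.map_cond_preimage_left hT hH hs hμs, hYlaw]

end IndepFun

variable {U V : Ω → β} {B : Set Ω} {S : Set β}

lemma pos_and_map_cond_eq_of_map_cond_eq [IsFiniteMeasure μ] (hU : Measurable U)
    (hV : Measurable V) (hB : MeasurableSet B) (hS : MeasurableSet S)
    (h : (μ[|B]).map U = μ.map V) (hpos : 0 < μ (B ∩ U ⁻¹' S)) :
    0 < μ (V ⁻¹' S) ∧ (μ[|B ∩ U ⁻¹' S]).map U = (μ[|V ⁻¹' S]).map V := by
  have hVS : μ (V ⁻¹' S) = (μ B)⁻¹ * μ (B ∩ U ⁻¹' S) := by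
    rw [← Measure.map_apply hV hS, ← h, Measure.map_apply hU hS, cond_apply hB]
  refine ⟨hVS ▸ ENNReal.mul_pos (ENNReal.inv_ne_zero.2 (measure_ne_top _ _)) hpos.ne', ?_⟩
  rw [← cond_cond_eq_cond_inter hB (hU hS), map_cond_preimage hU hS, h, map_cond_preimage hV hS]

section FinFamily

variable {n : ℕ} {X : Fin n → Ω → α}

lemma iIndepFun.indepFun_Ici_castLE (hX : iIndepFun X μ)
    (hXmeas : ∀ i, Measurable (X i)) (m : Fin n) :
    IndepFun (fun ω (i : Finset.Ici m) => X i ω) (fun ω (i : Fin m) => X (Fin.castLE m.is_le' i) ω)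
      μ := by
  refine (hX.indepFun_finset _ (Finset.Iio m) ?_ hXmeas).comp measurable_id
    (ψ := fun t i => t ⟨Fin.castLE m.is_le' i, Finset.mem_Iio.2 i.isLt⟩) (by fun_prop)
  rw [← Finset.disjoint_coe, Finset.coe_Ici, Finset.coe_Iio]
  exact (Set.Iio_disjoint_Ici le_rfl).symm

variable [IsFiniteMeasure μ] [PartialOrder α] [TopologicalSpace α] [OrderClosedTopology α]
  [SecondCountableTopology α] [OpensMeasurableSpace α]

lemma iIndepFun.map_prod_cond_antitoneOn_Ici (hX : iIndepFun X μ)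
    (hXmeas : ∀ i, Measurable (X i)) (m : Fin n) {Y : Ω → α} (hY : Measurable Y)
    (hYH : IndepFun Y (fun ω (i : Fin m) => X (Fin.castLE m.is_le' i) ω) μ)
    (hpos : μ {ω | AntitoneOn (X · ω) (Ici m)} ≠ 0)
    (hYlaw : μ.map Y = (μ[|{ω | AntitoneOn (X · ω) (Ici m)}]).map (X m)) :
    (μ[|{ω | AntitoneOn (X · ω) (Ici m)}]).map
        (fun ω => (X m ω, fun i : Fin m => X (Fin.castLE m.is_le' i) ω)) =
      μ.map (fun ω => (Y ω, fun i : Fin m => X (Fin.castLE m.is_le' i) ω)) := by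
  have hB : {ω | AntitoneOn (X · ω) (Ici m)} =
      (fun ω (i : Finset.Ici m) => X i ω) ⁻¹' {t | Antitone t} :=
    ext fun ω => antitoneOn_Ici_iff_antitone_finsetIci
  rw [hB] at hpos hYlaw ⊢
  exact (hX.indepFun_Ici_castLE hXmeas m).map_prod_cond_preimage_left hYH (by fun_prop)
    (by fun_prop) (measurable_pi_apply ⟨m, by simp⟩) hY measurableSet_setOf_antitone hpos hYlaw

end FinFamily

end ProbabilityTheory

section FinReverse

variable {β : Type*} {n k : ℕ}

def consRev (k : ℕ) (p : β × (Fin (k - 1) → β)) : Fin k → β :=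
  fun i => if h : (i : ℕ) = 0 then p.1 else p.2 ⟨k - 1 - i, by omega⟩

lemma measurable_consRev [MeasurableSpace β] (k : ℕ) : Measurable (consRev (β := β) k) := by
  refine measurable_pi_lambda _ fun i => ?_
  by_cases h : (i : ℕ) = 0
  · simp only [consRev, dif_pos h]; fun_prop
  · simp only [consRev, dif_neg h]; fun_prop

def revPrefix (hkn : k ≤ n) (x : Fin n → β) : Fin k → β :=
  fun i => x ⟨k - 1 - i, Nat.sub_lt_of_lt (Nat.sub_one_lt_of_le i.pos hkn)⟩

variable [Preorder β]

lemma monotone_revPrefix_iff (hk : 1 ≤ k) (hkn : k ≤ n) (x : Fin n → β) :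
    Monotone (revPrefix hkn x) ↔ AntitoneOn x (Iic ⟨k - 1, Nat.sub_one_lt_of_le hk hkn⟩) := by
  constructor
  · intro h i hi j hj hij
    simp only [mem_Iic, Fin.le_def] at hi hj hij
    simpa [revPrefix, Nat.sub_sub_self hi, Nat.sub_sub_self hj] using
      @h ⟨k - 1 - j, by omega⟩ ⟨k - 1 - i, by omega⟩ (by simp only [Fin.le_def]; omega)
  · intro h a b hab
    simp only [Fin.le_def] at hab
    exact h (by simp only [mem_Iic, Fin.le_def]; omega) (by simp only [mem_Iic, Fin.le_def]; omega)
      (by simp only [Fin.le_def]; omega)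

lemma antitone_iff_antitoneOn_Ici_and_monotone_revPrefix (hk : 1 ≤ k) (hkn : k ≤ n)
    (x : Fin n → β) :
    Antitone x ↔
      AntitoneOn x (Ici ⟨k - 1, Nat.sub_one_lt_of_le hk hkn⟩) ∧ Monotone (revPrefix hkn x) := by
  rw [monotone_revPrefix_iff hk hkn]
  exact ⟨fun h => ⟨h.antitoneOn _, h.antitoneOn _⟩, fun h => h.2.Iic_union_Ici h.1⟩

lemma monotone_ite_revPrefix_iff (hkn : k ≤ n) (x : Fin n → β) (y : β) :
    Monotone (fun i : Fin k => if (i : ℕ) = 0 then y else revPrefix hkn x i) ↔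
      (∀ i j : Fin n, i ≤ j → (j : ℕ) + 2 ≤ k → x j ≤ x i) ∧
        ∀ j : Fin n, (j : ℕ) + 2 ≤ k → y ≤ x j := by
  constructor
  · intro h
    refine ⟨fun i j hij hj => ?_, fun j hj => ?_⟩
    · have := @h ⟨k - 1 - j, by omega⟩ ⟨k - 1 - i, by omega⟩ (by simp only [Fin.le_def] at hij ⊢; omega)
      simpa [revPrefix, show k - 1 - (j : ℕ) ≠ 0 by omega, show k - 1 - (i : ℕ) ≠ 0 by omega,
        Nat.sub_sub_self (show (j : ℕ) ≤ k - 1 by omega),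
        Nat.sub_sub_self (show (i : ℕ) ≤ k - 1 by omega)] using this
    · have := @h ⟨0, by omega⟩ ⟨k - 1 - j, by omega⟩ (by simp only [Fin.le_def]; omega)
      simpa [revPrefix, show k - 1 - (j : ℕ) ≠ 0 by omega,
        Nat.sub_sub_self (show (j : ℕ) ≤ k - 1 by omega)] using this
  · rintro ⟨hx, hy⟩ a b hab
    simp only [Fin.le_def] at hab
    by_cases ha : (a : ℕ) = 0
    · by_cases hb : (b : ℕ) = 0
      · simp [ha, hb]
      · simp only [ha, hb, if_true, if_false]
        exact hy _ (by simp only; omega)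
    · simp only [ha, show (b : ℕ) ≠ 0 by omega, if_false]
      exact hx _ _ (by simp only [Fin.le_def]; omega) (by simp only; omega)

end FinReverse

/-- **Conditioning by steps.**
Let `X_1, …, X_n` be independent real random variables (below `X i` represents
`X_{i+1}`) with `P(X_n ≤ ⋯ ≤ X_1) > 0`.  Fix `1 ≤ k ≤ n` and let `Y_k` be a random
variable, independent of `(X_1, …, X_{k−1})`, whose law is that of `X_k` conditioned on
`X_n ≤ ⋯ ≤ X_k`.  Then `P(Y_k ≤ X_{k−1} ≤ ⋯ ≤ X_1) > 0` and the law of `(X_k, …, X_1)`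
conditioned on `X_n ≤ ⋯ ≤ X_1` equals the law of `(Y_k, X_{k−1}, …, X_1)` conditioned on
`Y_k ≤ X_{k−1} ≤ ⋯ ≤ X_1`.  (Coordinate `i` of the `Fin k`-valued vectors represents
the `(i+1)`-th entry of `(X_k, …, X_1)` resp. `(Y_k, X_{k−1}, …, X_1)`.) -/
theorem conditioning_by_steps
    (Ω : Type*) [MeasurableSpace Ω] (P : Measure Ω) [IsProbabilityMeasure P]
    (n : ℕ) (X : Fin n → Ω → ℝ) (hXmeas : ∀ i, Measurable (X i))
    (hXindep : iIndepFun X P)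
    (hpos : 0 < P {ω | ∀ i j : Fin n, i ≤ j → X j ω ≤ X i ω})
    (k : ℕ) (hk : 1 ≤ k) (hkn : k ≤ n)
    (Yk : Ω → ℝ) (hYkmeas : Measurable Yk)
    (hYklaw : Measure.map Yk P =
      Measure.map (fun ω => X ⟨k - 1, by omega⟩ ω)
        (P[|{ω | ∀ i j : Fin n, k - 1 ≤ (i : ℕ) → i ≤ j → X j ω ≤ X i ω}]))
    (hYkindep : IndepFun Yk
      (fun ω => fun i : Fin (k - 1) => X ⟨(i : ℕ), by have := i.isLt; omega⟩ ω) P) :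
    0 < P {ω | (∀ i j : Fin n, i ≤ j → (j : ℕ) + 2 ≤ k → X j ω ≤ X i ω) ∧
          ∀ j : Fin n, (j : ℕ) + 2 ≤ k → Yk ω ≤ X j ω} ∧
    Measure.map (fun ω => fun i : Fin k => X ⟨k - 1 - (i : ℕ), by omega⟩ ω)
        (P[|{ω | ∀ i j : Fin n, i ≤ j → X j ω ≤ X i ω}]) =
      Measure.map
        (fun ω => fun i : Fin k =>
          if (i : ℕ) = 0 then Yk ω else X ⟨k - 1 - (i : ℕ), by omega⟩ ω)
        (P[|{ω | (∀ i j : Fin n, i ≤ j → (j : ℕ) + 2 ≤ k → X j ω ≤ X i ω) ∧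
              ∀ j : Fin n, (j : ℕ) + 2 ≤ k → Yk ω ≤ X j ω}]) := by
  set m : Fin n := ⟨k - 1, by omega⟩
  set A := {ω | ∀ i j : Fin n, i ≤ j → X j ω ≤ X i ω}
  set B := {ω | ∀ i j : Fin n, k - 1 ≤ (i : ℕ) → i ≤ j → X j ω ≤ X i ω}
  set C := {ω | (∀ i j : Fin n, i ≤ j → (j : ℕ) + 2 ≤ k → X j ω ≤ X i ω) ∧
    ∀ j : Fin n, (j : ℕ) + 2 ≤ k → Yk ω ≤ X j ω}
  set H : Ω → Fin (k - 1) → ℝ := fun ω i => X ⟨i, by have := i.isLt; omega⟩ ω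
  set U := fun ω (i : Fin k) => X ⟨k - 1 - (i : ℕ), by omega⟩ ω
  set V := fun ω (i : Fin k) => if (i : ℕ) = 0 then Yk ω else X ⟨k - 1 - (i : ℕ), by omega⟩ ω
  have hB : B = {ω | AntitoneOn (X · ω) (Ici m)} :=
    ext fun ω => (antitoneOn_Ici_iff (f := (X · ω)) (a := m)).symm
  have hBmeas : MeasurableSet B :=
    hB ▸ measurable_pi_lambda _ hXmeas (measurableSet_setOf_antitoneOn _)
  have hAB : A ⊆ B := fun ω h i j _ hij => h i j hij
  have hPB : P B ≠ 0 := (hpos.trans_le (measure_mono hAB)).ne'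
  have hjoint : (P[|B]).map (fun ω => (X m ω, H ω)) = P.map (fun ω => (Yk ω, H ω)) := by
    rw [hB] at hPB hYklaw ⊢
    exact hXindep.map_prod_cond_antitoneOn_Ici hXmeas m hYkmeas hYkindep hPB hYklaw
  have hU : U = consRev k ∘ fun ω => (X m ω, H ω) := by
    ext ω i
    by_cases hi : (i : ℕ) = 0 <;> simp [U, consRev, hi, m, H]
  have hV : V = consRev k ∘ fun ω => (Yk ω, H ω) := rfl
  have hUm : Measurable U := by fun_prop
  have hVm : Measurable V := hV ▸ (measurable_consRev k).comp (by fun_prop)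
  have hlaw : (P[|B]).map U = P.map V := by
    rw [hU, hV, ← Measure.map_map (measurable_consRev k) (by fun_prop), hjoint,
      Measure.map_map (measurable_consRev k) (by fun_prop)]
  have hA : A = B ∩ U ⁻¹' {v | Monotone v} := ext fun ω =>
    (antitone_iff_antitoneOn_Ici_and_monotone_revPrefix hk hkn (X · ω)).trans
      (and_congr_left' antitoneOn_Ici_iff)
  have hC : C = V ⁻¹' {v | Monotone v} :=
    ext fun ω => (monotone_ite_revPrefix_iff hkn (X · ω) (Yk ω)).symm
  rw [hA] at hpos ⊢
  rw [hC]
  exact pos_and_map_cond_eq_of_map_cond_eq hUm hVm hBmeas measurableSet_setOf_monotone hlaw hpos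
end

section
/- Preservation of non-decreasing densities under order conditioning: let X_1,...,X_n, Y_1,...,Y_n be independent real random variables with X_i ~ μ_i and Y_i ~ ν_i, where each ν_i is absolutely continuous with respect to μ_i with a non-decreasing density ρ_i = dν_i/dμ_i, and assume P(X_n ≤ ... ≤ X_1) > 0 and P(Y_n ≤ ... ≤ Y_1) > 0. Define μ̃ as the law of X_1 conditioned on X_n ≤ ... ≤ X_1 and ν̃ as the law of Y_1 conditioned on Y_n ≤ ... ≤ Y_1. Then ν̃ is absolutely continuous with respect to μ̃ with a non-decreasing density dν̃/dμ̃. Consequently (via domination from a non-decreasing density), for every t ∈ ℝ, P(Y_1 ≤ t | Y_n ≤ ... ≤ Y_1) ≤ P(X_1 ≤ t | X_n ≤ ... ≤ X_1). -/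
/-!
Write `G_m(t)` for the `Measure.pi m`-probability that a tuple is sorted decreasingly with all
entries at most `t`. Splitting off the first coordinate gives
`(Measure.pi m)(sorted ∩ {y 0 ∈ B}) = ∫_B G_{m ∘ succ} d(m 0)`, so the law of `X_1` given
`X_n ≤ ⋯ ≤ X_1` has `μ_1`-density `G_{μ ∘ succ} / Z_μ`, where `Z_μ` is the probability of the
ordering, while that of `Y_1` has `μ_1`-density `ρ_1 G_{ν ∘ succ} / Z_ν`. Since `G_ν` vanishes
wherever `G_μ` does, `dν̃/dμ̃ = (Z_μ / Z_ν) ρ_1 G_{ν ∘ succ} / G_{μ ∘ succ}`, and it remains to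
show that `G_ν / G_μ` is nondecreasing. By induction on the length,
`G_ν(t) = ∫_{x ≤ t} ρ_1 G_{ν ∘ succ} dμ_1` and `G_μ(t) = ∫_{x ≤ t} G_{μ ∘ succ} dμ_1` have
integrands with nondecreasing ratio, and integration over `Iic t` preserves a nondecreasing
ratio: for `s ≤ t` the cross terms `∫_{x ≤ s} ∫_{s < y ≤ t}` compare pointwise. Finally, a
probability measure with a nondecreasing density with respect to another one is stochastically
larger.
-/

open MeasureTheory ProbabilityTheory Set
open scoped ENNReal ProbabilityTheory

theorem Fin.antitone_cons {α : Type*} [Preorder α] {n : ℕ} {a : α} {f : Fin n → α} :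
    Antitone (Fin.cons a f : Fin (n + 1) → α) ↔ (∀ i, f i ≤ a) ∧ Antitone f := by
  simpa only [antitone_iff_forall_lt, Relator.LiftFun, ge_iff_le] using
    Fin.liftFun_cons (n := n) (· ≥ ·) (a := a) (f := f)

section SortedMass

variable {k : ℕ}

theorem measurableSet_setOf_antitone_s18 : MeasurableSet {y : Fin k → ℝ | Antitone y} :=
  isClosed_antitone.measurableSet

noncomputable def sortedMass (m : Fin k → Measure ℝ) (t : ℝ) : ℝ≥0∞ :=
  Measure.pi m {z | Antitone z ∧ ∀ i, z i ≤ t}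

theorem sortedMass_mono (m : Fin k → Measure ℝ) : Monotone (sortedMass m) :=
  fun _ _ hst => measure_mono fun _ hz => ⟨hz.1, fun i => (hz.2 i).trans hst⟩

theorem sortedMass_ne_top (m : Fin k → Measure ℝ) [∀ i, IsFiniteMeasure (m i)] (t : ℝ) :
    sortedMass m t ≠ ∞ :=
  measure_ne_top _ _

theorem sortedMass_zero (m : Fin 0 → Measure ℝ) (t : ℝ) : sortedMass m t = 1 := by
  simp [sortedMass, Subsingleton.antitone]

theorem measure_pi_setOf_antitone_inter_preimage_zero (m : Fin (k + 1) → Measure ℝ)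
    [∀ i, SigmaFinite (m i)] {B : Set ℝ} (hB : MeasurableSet B) :
    Measure.pi m ({y | Antitone y} ∩ (fun y => y 0) ⁻¹' B) =
      ∫⁻ x in B, sortedMass (fun j => m j.succ) x ∂m 0 := by
  set S := {y : Fin (k + 1) → ℝ | Antitone y} ∩ (fun y => y 0) ⁻¹' B
  set e := MeasurableEquiv.piFinSuccAbove (fun _ : Fin (k + 1) => ℝ) 0
  have hpres := measurePreserving_piFinSuccAbove m 0
  simp only [Fin.zero_succAbove] at hpres
  have hS : MeasurableSet (e.symm ⁻¹' S) :=
    e.symm.measurable (measurableSet_setOf_antitone_s18.inter (measurable_pi_apply 0 hB))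
  have hsection : ∀ x,
      Prod.mk x ⁻¹' (e.symm ⁻¹' S) = {z | x ∈ B ∧ Antitone z ∧ ∀ i, z i ≤ x} := by
    intro x
    ext z
    simp [S, e, MeasurableEquiv.piFinSuccAbove_symm_apply, Fin.consEquiv, Fin.antitone_cons,
      and_comm]
  rw [← (hpres.symm e).measure_preimage_equiv S, Measure.prod_apply hS, ← lintegral_indicator hB]
  refine lintegral_congr fun x => ?_
  by_cases hx : x ∈ B <;> simp [hsection, hx, sortedMass]

theorem sortedMass_succ (m : Fin (k + 1) → Measure ℝ) [∀ i, SigmaFinite (m i)] (t : ℝ) :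
    sortedMass m t = ∫⁻ x in Iic t, sortedMass (fun j => m j.succ) x ∂m 0 := by
  rw [← measure_pi_setOf_antitone_inter_preimage_zero m measurableSet_Iic, sortedMass]
  congr 1
  ext y
  exact ⟨fun h => ⟨h.1, h.2 0⟩, fun h => ⟨h.1, fun i => (h.1 (Fin.zero_le i)).trans h.2⟩⟩

theorem map_cond_setOf_antitone (m : Fin (k + 1) → Measure ℝ) [∀ i, SigmaFinite (m i)] :
    ((Measure.pi m)[|{y | Antitone y}]).map (fun y => y 0) =
      (Measure.pi m {y | Antitone y})⁻¹ • (m 0).withDensity (sortedMass fun j => m j.succ) := by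
  ext B hB
  rw [Measure.map_apply (measurable_pi_apply 0) hB, cond_apply measurableSet_setOf_antitone_s18,
    Measure.smul_apply, smul_eq_mul, withDensity_apply _ hB,
    measure_pi_setOf_antitone_inter_preimage_zero m hB]

end SortedMass

/-- `f / g` is nondecreasing, stated without division so that zeros of `g` are harmless. -/
def RatioMonotone {α : Type*} [Preorder α] (f g : α → ℝ≥0∞) : Prop :=
  ∀ ⦃x y⦄, x ≤ y → f x * g y ≤ f y * g x

namespace RatioMonotone

variable {α : Type*}

theorem mul_left [Preorder α] {φ f g : α → ℝ≥0∞} (hφ : Monotone φ) (h : RatioMonotone f g) :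
    RatioMonotone (fun x => φ x * f x) g := fun x y hxy =>
  calc φ x * f x * g y = φ x * (f x * g y) := mul_assoc ..
    _ ≤ φ y * (f y * g x) := mul_le_mul' (hφ hxy) (h hxy)
    _ = φ y * f y * g x := (mul_assoc ..).symm

theorem monotone_div [Preorder α] {f g : α → ℝ≥0∞} (h : RatioMonotone f g) (hg : Monotone g)
    (hg_top : ∀ x, g x ≠ ∞) (hfg : ∀ x, g x = 0 → f x = 0) : Monotone fun x => f x / g x := by
  intro x y hxy
  dsimp only
  by_cases hx : g x = 0
  · simp [hfg x hx]
  have hy : g y ≠ 0 := fun hy => hx (le_antisymm (hy ▸ hg hxy) zero_le)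
  rw [ENNReal.div_le_iff hx (hg_top x), mul_comm, ← mul_div_assoc,
    ENNReal.le_div_iff_mul_le (Or.inl hy) (Or.inl (hg_top y)), mul_comm (g x)]
  exact h hxy

variable [LinearOrder α] [TopologicalSpace α] [OrderClosedTopology α] [MeasurableSpace α]
  [OpensMeasurableSpace α]

theorem setLIntegral_Iic {m : Measure α} {f g : α → ℝ≥0∞} (hf : Measurable f) (hg : Measurable g)
    (h : RatioMonotone f g) :
    RatioMonotone (fun t => ∫⁻ x in Iic t, f x ∂m) (fun t => ∫⁻ x in Iic t, g x ∂m) := by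
  intro s t hst
  dsimp only
  have split : ∀ φ : α → ℝ≥0∞,
      ∫⁻ x in Iic t, φ x ∂m = ∫⁻ x in Iic s, φ x ∂m + ∫⁻ x in Ioc s t, φ x ∂m := fun φ => by
    rw [← Iic_union_Ioc_eq_Iic hst, lintegral_union measurableSet_Ioc (Iic_disjoint_Ioc le_rfl)]
  have product : ∀ φ ψ : α → ℝ≥0∞, Measurable φ → Measurable ψ →
      (∫⁻ x in Iic s, φ x ∂m) * ∫⁻ y in Ioc s t, ψ y ∂m =
        ∫⁻ x in Iic s, ∫⁻ y in Ioc s t, φ x * ψ y ∂m ∂m := fun φ ψ hφ hψ => by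
    rw [← lintegral_mul_const _ hφ]
    simp_rw [lintegral_const_mul _ hψ]
  have cross : (∫⁻ x in Iic s, f x ∂m) * ∫⁻ y in Ioc s t, g y ∂m ≤
      (∫⁻ y in Ioc s t, f y ∂m) * ∫⁻ x in Iic s, g x ∂m := by
    rw [mul_comm (∫⁻ y in Ioc s t, f y ∂m), product f g hf hg, product g f hg hf]
    refine setLIntegral_mono' measurableSet_Iic fun x hx =>
      setLIntegral_mono' measurableSet_Ioc fun y hy => ?_
    rw [mul_comm (g x)]
    exact h (hx.trans hy.1.le)
  rw [split f, split g, mul_add, add_mul]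
  exact add_le_add_right cross _

end RatioMonotone

section WithDensity

variable {k : ℕ}

theorem sortedMass_withDensity_succ (μ : Fin (k + 1) → Measure ℝ)
    (f : Fin (k + 1) → ℝ → ℝ≥0∞) [∀ i, SigmaFinite ((μ i).withDensity (f i))]
    (hf : Measurable (f 0)) (t : ℝ) :
    sortedMass (fun i => (μ i).withDensity (f i)) t =
      ∫⁻ x in Iic t, f 0 x * sortedMass (fun j => (μ j.succ).withDensity (f j.succ)) x ∂μ 0 := by
  rw [sortedMass_succ, setLIntegral_withDensity_eq_setLIntegral_mul _ hf
    (sortedMass_mono _).measurable measurableSet_Iic]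
  rfl

theorem sortedMass_withDensity_eq_zero (μ : Fin k → Measure ℝ) [∀ i, SigmaFinite (μ i)]
    (f : Fin k → ℝ → ℝ≥0∞) [∀ i, SigmaFinite ((μ i).withDensity (f i))]
    (hf : ∀ i, Measurable (f i)) {t : ℝ} (h : sortedMass μ t = 0) :
    sortedMass (fun i => (μ i).withDensity (f i)) t = 0 := by
  induction k generalizing t with
  | zero => simp [sortedMass_zero] at h
  | succ k ih =>
    rw [sortedMass_succ, setLIntegral_eq_zero_iff measurableSet_Iic
      (sortedMass_mono _).measurable] at h
    rw [sortedMass_withDensity_succ _ _ (hf 0),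
      setLIntegral_eq_zero_iff (f := fun x => f 0 x * sortedMass _ x) measurableSet_Iic
        ((hf 0).mul (sortedMass_mono _).measurable)]
    filter_upwards [h] with x hx hxt
    rw [ih (fun j => μ j.succ) (fun j => f j.succ) (fun j => hf j.succ) (hx hxt), mul_zero]

theorem ratioMonotone_sortedMass_withDensity (μ : Fin k → Measure ℝ) [∀ i, SigmaFinite (μ i)]
    (f : Fin k → ℝ → ℝ≥0∞) [∀ i, SigmaFinite ((μ i).withDensity (f i))]
    (hf : ∀ i, Monotone (f i)) :
    RatioMonotone (sortedMass fun i => (μ i).withDensity (f i)) (sortedMass μ) := by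
  induction k with
  | zero => intro x y _; simp [sortedMass_zero]
  | succ k ih =>
    rw [funext (sortedMass_withDensity_succ μ f (hf 0).measurable), funext (sortedMass_succ μ)]
    exact ((ih (fun j => μ j.succ) (fun j => f j.succ) (fun j => hf j.succ)).mul_left
      (hf 0)).setLIntegral_Iic ((hf 0).measurable.mul (sortedMass_mono _).measurable)
      (sortedMass_mono _).measurable

theorem exists_monotone_density_map_cond_setOf_antitone (μ : Fin (k + 1) → Measure ℝ)
    [∀ i, IsFiniteMeasure (μ i)] (f : Fin (k + 1) → ℝ → ℝ≥0∞)
    [∀ i, IsFiniteMeasure ((μ i).withDensity (f i))] (hf : ∀ i, Monotone (f i))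
    (hf_top : ∀ x, f 0 x ≠ ∞) (hμ : Measure.pi μ {y | Antitone y} ≠ 0)
    (hν : Measure.pi (fun i => (μ i).withDensity (f i)) {y | Antitone y} ≠ 0) :
    ∃ g : ℝ → ℝ≥0∞, Monotone g ∧ (∀ x, g x ≠ ∞) ∧
      ((Measure.pi fun i => (μ i).withDensity (f i))[|{y | Antitone y}]).map (fun y => y 0) =
        (((Measure.pi μ)[|{y | Antitone y}]).map (fun y => y 0)).withDensity g := by
  set Zμ := Measure.pi μ {y | Antitone y}
  set Zν := Measure.pi (fun i => (μ i).withDensity (f i)) {y | Antitone y}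
  set Gμ := sortedMass fun j => μ j.succ
  set Gν := sortedMass fun j => (μ j.succ).withDensity (f j.succ)
  have hGμ : Measurable Gμ := (sortedMass_mono _).measurable
  have hGν : Measurable Gν := (sortedMass_mono _).measurable
  have hzero : ∀ x, Gμ x = 0 → Gν x = 0 := fun x =>
    sortedMass_withDensity_eq_zero _ _ fun j => (hf j.succ).measurable
  have hratio : Monotone fun x => Gν x / Gμ x :=
    (ratioMonotone_sortedMass_withDensity _ _ fun j => hf j.succ).monotone_div
      (sortedMass_mono _) (sortedMass_ne_top _) hzero
  set g : ℝ → ℝ≥0∞ := fun x => Zμ / Zν * (f 0 x * (Gν x / Gμ x))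
  have hg : Monotone g := fun x y hxy => mul_le_mul_right (mul_le_mul' (hf 0 hxy) (hratio hxy)) _
  refine ⟨g, hg, fun x => ?_, ?_⟩
  · refine ENNReal.mul_ne_top (ENNReal.div_ne_top (measure_ne_top _ _) hν)
      (ENNReal.mul_ne_top (hf_top x) ?_)
    by_cases hx : Gμ x = 0
    · simp [hx, hzero x hx]
    · exact ENNReal.div_ne_top (sortedMass_ne_top _ x) hx
  have hdensity : Gμ * g = (Zμ / Zν) • (f 0 * Gν) := by
    ext x
    simp only [g, Pi.mul_apply, Pi.smul_apply, smul_eq_mul]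
    rw [mul_left_comm, mul_left_comm (Gμ x),
      ENNReal.mul_div_cancel' (hzero x) fun h => absurd h (sortedMass_ne_top _ x)]
  rw [map_cond_setOf_antitone, map_cond_setOf_antitone, withDensity_smul_measure,
    ← withDensity_mul _ hGμ hg.measurable, hdensity, withDensity_smul _ ((hf 0).measurable.mul hGν),
    withDensity_mul _ (hf 0).measurable hGν, smul_smul]
  congr 1
  exact (ENNReal.inv_mul_cancel_left hμ (measure_ne_top _ _)).symm

end WithDensity

theorem measure_Iic_le_of_eq_withDensity {α : Type*} [LinearOrder α] [TopologicalSpace α]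
    [OrderClosedTopology α] [MeasurableSpace α] [OpensMeasurableSpace α] {P Q : Measure α}
    [IsProbabilityMeasure P] [IsProbabilityMeasure Q] {g : α → ℝ≥0∞} (hg : Monotone g)
    (hQ : Q = P.withDensity g) (t : α) : Q (Iic t) ≤ P (Iic t) := by
  subst hQ
  by_cases hgt : g t ≤ 1
  · calc P.withDensity g (Iic t) = ∫⁻ x in Iic t, g x ∂P := withDensity_apply _ measurableSet_Iic
      _ ≤ ∫⁻ _ in Iic t, g t ∂P := setLIntegral_mono' measurableSet_Iic fun x hx => hg hx
      _ = g t * P (Iic t) := setLIntegral_const _ _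
      _ ≤ P (Iic t) := mul_le_of_le_one_left' hgt
  · have hIoi : P (Ioi t) ≤ P.withDensity g (Ioi t) :=
      calc P (Ioi t) ≤ g t * P (Ioi t) := le_mul_of_one_le_left' (not_le.1 hgt).le
        _ = ∫⁻ _ in Ioi t, g t ∂P := (setLIntegral_const _ _).symm
        _ ≤ ∫⁻ x in Ioi t, g x ∂P := setLIntegral_mono' measurableSet_Ioi fun x hx => hg hx.le
        _ = P.withDensity g (Ioi t) := (withDensity_apply _ measurableSet_Ioi).symm
    rw [← compl_Ioi, prob_compl_eq_one_sub measurableSet_Ioi,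
      prob_compl_eq_one_sub measurableSet_Ioi]
    exact tsub_le_tsub_left hIoi _

theorem nondecreasing_density_preserved_by_order_conditioning_general
    (n : ℕ) (hn : 0 < n)
    (μ ν : Fin n → Measure ℝ)
    [∀ i, IsProbabilityMeasure (μ i)] [∀ i, IsProbabilityMeasure (ν i)]
    (ρ : Fin n → ℝ → ℝ)
    (hρmono : ∀ i, Monotone (ρ i))
    (hν : ∀ i, ν i = (μ i).withDensity fun x => ENNReal.ofReal (ρ i x))
    (hposμ : 0 < Measure.pi μ {y | ∀ i j : Fin n, i ≤ j → y j ≤ y i})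
    (hposν : 0 < Measure.pi ν {y | ∀ i j : Fin n, i ≤ j → y j ≤ y i}) :
    (∃ g : ℝ → ℝ, Monotone g ∧ (∀ x, 0 ≤ g x) ∧ Measurable g ∧
      Measure.map (fun y => y ⟨0, hn⟩)
          ((Measure.pi ν)[|{y | ∀ i j : Fin n, i ≤ j → y j ≤ y i}]) =
        (Measure.map (fun y => y ⟨0, hn⟩)
          ((Measure.pi μ)[|{y | ∀ i j : Fin n, i ≤ j → y j ≤ y i}])).withDensity
            fun x => ENNReal.ofReal (g x)) ∧
    ∀ t : ℝ,
      Measure.map (fun y => y ⟨0, hn⟩)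
          ((Measure.pi ν)[|{y | ∀ i j : Fin n, i ≤ j → y j ≤ y i}]) (Set.Iic t) ≤
        Measure.map (fun y => y ⟨0, hn⟩)
          ((Measure.pi μ)[|{y | ∀ i j : Fin n, i ≤ j → y j ≤ y i}]) (Set.Iic t) := by
  obtain ⟨k, rfl⟩ : ∃ k, n = k + 1 := ⟨n - 1, by omega⟩
  obtain rfl : ν = fun i => (μ i).withDensity fun x => ENNReal.ofReal (ρ i x) := funext hν
  have hA : {y : Fin (k + 1) → ℝ | ∀ i j, i ≤ j → y j ≤ y i} = {y | Antitone y} := rfl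
  have h0 : (⟨0, hn⟩ : Fin (k + 1)) = 0 := rfl
  rw [hA] at hposμ hposν ⊢
  rw [h0]
  obtain ⟨g, hg, hg_top, hdensity⟩ := exists_monotone_density_map_cond_setOf_antitone μ
    (fun i x => ENNReal.ofReal (ρ i x)) (fun i => ENNReal.ofReal_mono.comp (hρmono i))
    (fun _ => ENNReal.ofReal_ne_top) hposμ.ne' hposν.ne'
  have := cond_isProbabilityMeasure hposμ.ne'
  have := cond_isProbabilityMeasure hposν.ne'
  have : IsProbabilityMeasure (((Measure.pi μ)[|{y | Antitone y}]).map fun y => y 0) :=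
    Measure.isProbabilityMeasure_map (measurable_pi_apply 0).aemeasurable
  have : IsProbabilityMeasure (((Measure.pi fun i => (μ i).withDensity fun x =>
      ENNReal.ofReal (ρ i x))[|{y | Antitone y}]).map fun y => y 0) :=
    Measure.isProbabilityMeasure_map (measurable_pi_apply 0).aemeasurable
  have hg_real : (fun x => ENNReal.ofReal (g x).toReal) = g :=
    funext fun x => ENNReal.ofReal_toReal (hg_top x)
  refine ⟨⟨fun x => (g x).toReal, fun x y hxy => ENNReal.toReal_mono (hg_top y) (hg hxy),
    fun x => ENNReal.toReal_nonneg, hg.measurable.ennreal_toReal, hg_real.symm ▸ hdensity⟩,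
    measure_Iic_le_of_eq_withDensity hg hdensity⟩

/-- **Preservation of non-decreasing densities under order conditioning.**
Let `X_1, …, X_n` be independent with `X_i ∼ μ_i` and `Y_1, …, Y_n` independent with
`Y_i ∼ ν_i = ρ_i · μ_i` for non-decreasing densities `ρ_i`, and suppose the ordering
events `X_n ≤ ⋯ ≤ X_1` and `Y_n ≤ ⋯ ≤ Y_1` have positive probability (joint laws are
the product measures; coordinate `i` represents the `(i+1)`-th variable).  Let `μ̃` be
the law of `X_1` conditioned on `X_n ≤ ⋯ ≤ X_1` and `ν̃` the law of `Y_1` conditioned on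
`Y_n ≤ ⋯ ≤ Y_1`.  Then `ν̃ ≪ μ̃` with a non-decreasing density, and consequently
`P(Y_1 ≤ t | Y_n ≤ ⋯ ≤ Y_1) ≤ P(X_1 ≤ t | X_n ≤ ⋯ ≤ X_1)` for every `t`. -/
theorem nondecreasing_density_preserved_by_order_conditioning
    (n : ℕ) (hn : 0 < n)
    (μ ν : Fin n → Measure ℝ)
    [∀ i, IsProbabilityMeasure (μ i)] [∀ i, IsProbabilityMeasure (ν i)]
    (ρ : Fin n → ℝ → ℝ)
    (hρmono : ∀ i, Monotone (ρ i)) (hρ0 : ∀ i x, 0 ≤ ρ i x)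
    (hρmeas : ∀ i, Measurable (ρ i))
    (hν : ∀ i, ν i = (μ i).withDensity fun x => ENNReal.ofReal (ρ i x))
    (hposμ : 0 < Measure.pi μ {y | ∀ i j : Fin n, i ≤ j → y j ≤ y i})
    (hposν : 0 < Measure.pi ν {y | ∀ i j : Fin n, i ≤ j → y j ≤ y i}) :
    (∃ g : ℝ → ℝ, Monotone g ∧ (∀ x, 0 ≤ g x) ∧ Measurable g ∧
      Measure.map (fun y => y ⟨0, hn⟩)
          ((Measure.pi ν)[|{y | ∀ i j : Fin n, i ≤ j → y j ≤ y i}]) =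
        (Measure.map (fun y => y ⟨0, hn⟩)
          ((Measure.pi μ)[|{y | ∀ i j : Fin n, i ≤ j → y j ≤ y i}])).withDensity
            fun x => ENNReal.ofReal (g x)) ∧
    ∀ t : ℝ,
      Measure.map (fun y => y ⟨0, hn⟩)
          ((Measure.pi ν)[|{y | ∀ i j : Fin n, i ≤ j → y j ≤ y i}]) (Set.Iic t) ≤
        Measure.map (fun y => y ⟨0, hn⟩)
          ((Measure.pi μ)[|{y | ∀ i j : Fin n, i ≤ j → y j ≤ y i}]) (Set.Iic t) :=
  nondecreasing_density_preserved_by_order_conditioning_general n hn μ ν ρ hρmono hν hposμ hposν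
end
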